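/- arXiv:1210.1973 — 3 statements merged into one kernel-verified Lean document; each statement's English description precedes it below -/
import Mathlib

section
/- Let (h_j)_{j=1}^N and (U_j)_{j=1}^N be real-valued functions on a set X with |h_j| ≤ C·U_j and 0 ≤ U_j ≤ 1 pointwise. Set h = Σ_j h_j and h̃ = Σ_j h_j ∏_{j' > j}(1 - U_{j'}). Then h - h̃ = Σ_j U_j V_j where V_j := Σ_{j' < j} h_{j'} ∏_{j' < j'' < j}(1 - U_{j''}), and moreover |V_j(x)| ≤ C for all j and all x ∈ X. -/
/-!
Both claims rest on the telescoping identity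
`1 - ∏_{k ∈ s} (1 - u_k) = Σ_{j ∈ s} u_j ∏_{k ∈ s, k < j} (1 - u_k)` and its mirror image with `k > j`.
The first form on `s = (j, N]`, followed by exchanging the order of summation, gives
`h - h̃ = Σ_j U_j V_j`. For the bound, `|h_{j'}| ≤ C U_{j'}` and the mirror form on `[1, j)` give
`|V_j| ≤ C (1 - ∏_{[1, j)} (1 - U)) ≤ C`, since each factor `1 - U` is nonnegative.
-/

open Finset

namespace Finset

variable {ι R : Type*} [LinearOrder ι] [LocallyFiniteOrder ι]

theorem one_sub_prod_Ioc_one_sub [CommRing R] (u : ι → R) (a b : ι) :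
    1 - ∏ k ∈ Ioc a b, (1 - u k) = ∑ j ∈ Ioc a b, u j * ∏ k ∈ Ioo a j, (1 - u k) := by
  rw [prod_one_sub_ordered, sub_sub_cancel]
  refine sum_congr rfl fun j hj => ?_
  congr 2
  ext k
  simp only [mem_filter, mem_Ioc, mem_Ioo] at hj ⊢
  grind

theorem one_sub_prod_Ico_one_sub [CommRing R] (u : ι → R) (a b : ι) :
    1 - ∏ k ∈ Ico a b, (1 - u k) = ∑ j ∈ Ico a b, u j * ∏ k ∈ Ioo j b, (1 - u k) := by
  have h := prod_add_ordered (Ico a b) (fun k => 1 - u k) u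
  simp only [sub_add_cancel, prod_const_one, mul_one] at h
  rw [← eq_sub_of_add_eq' h.symm]
  refine sum_congr rfl fun j hj => ?_
  congr 2
  ext k
  simp only [mem_filter, mem_Ico, mem_Ioo] at hj ⊢
  grind

theorem sum_sub_sum_mul_prod_Ioc_one_sub [CommRing R] (f u : ι → R) (a b : ι) :
    ∑ j ∈ Icc a b, f j - ∑ j ∈ Icc a b, f j * ∏ k ∈ Ioc j b, (1 - u k)
      = ∑ k ∈ Icc a b, u k * ∑ j ∈ Ico a k, f j * ∏ l ∈ Ioo j k, (1 - u l) := by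
  simp_rw [← sum_sub_distrib, ← mul_one_sub, one_sub_prod_Ioc_one_sub, mul_sum]
  rw [sum_comm' (t' := Icc a b) (s' := fun k => Ico a k)]
  · exact sum_congr rfl fun k _ => sum_congr rfl fun j _ => by ring
  · intro j k
    simp only [mem_Icc, mem_Ioc, mem_Ico]
    grind

theorem abs_sum_mul_prod_Ioo_one_sub_le [CommRing R] [LinearOrder R] [IsStrictOrderedRing R]
    {f u : ι → R} {C : R} {a b : ι}
    (hC : 0 ≤ C) (hf : ∀ j ∈ Ico a b, |f j| ≤ C * u j) (hu : ∀ j ∈ Ico a b, u j ≤ 1) :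
    |∑ j ∈ Ico a b, f j * ∏ k ∈ Ioo j b, (1 - u k)| ≤ C := by
  have hprod : ∀ s ⊆ Ico a b, 0 ≤ ∏ k ∈ s, (1 - u k) := fun s hs =>
    prod_nonneg fun k hk => sub_nonneg.2 (hu k (hs hk))
  calc |∑ j ∈ Ico a b, f j * ∏ k ∈ Ioo j b, (1 - u k)|
      ≤ ∑ j ∈ Ico a b, C * (u j * ∏ k ∈ Ioo j b, (1 - u k)) := by
        refine (abs_sum_le_sum_abs _ _).trans (sum_le_sum fun j hj => ?_)
        have hsub : Ioo j b ⊆ Ico a b := fun k hk => by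
          simp only [mem_Ico, mem_Ioo] at hj hk ⊢
          exact ⟨hj.1.trans hk.1.le, hk.2⟩
        rw [abs_mul, abs_of_nonneg (hprod _ hsub), ← mul_assoc]
        exact mul_le_mul_of_nonneg_right (hf j hj) (hprod _ hsub)
    _ = C * (1 - ∏ k ∈ Ico a b, (1 - u k)) := by rw [← mul_sum, one_sub_prod_Ico_one_sub]
    _ ≤ C := mul_le_of_le_one_right hC (sub_le_self _ (hprod _ subset_rfl))

end Finset

/-- With `|h_j| ≤ C·U_j`, `0 ≤ U_j ≤ 1` pointwise, `h = Σ_j h_j` and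
`h̃ = Σ_j h_j ∏_{j' > j}(1 - U_{j'})`, one has `h - h̃ = Σ_j U_j V_j` where
`V_j = Σ_{j' < j} h_{j'} ∏_{j' < j'' < j}(1 - U_{j''})`, and `|V_j(x)| ≤ C` for all `j`, `x`. -/
theorem approx_error_decomposition {X : Type*} (N : ℕ) (C : ℝ) (hC : 0 < C)
    (h U : ℕ → X → ℝ)
    (hh : ∀ j ∈ Finset.Icc 1 N, ∀ x, |h j x| ≤ C * U j x)
    (hU : ∀ j ∈ Finset.Icc 1 N, ∀ x, 0 ≤ U j x ∧ U j x ≤ 1) :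
    (∀ x, (∑ j ∈ Finset.Icc 1 N, h j x)
        - (∑ j ∈ Finset.Icc 1 N, h j x * ∏ j' ∈ Finset.Ioc j N, (1 - U j' x))
      = ∑ j ∈ Finset.Icc 1 N, U j x *
          (∑ j' ∈ Finset.Ico 1 j, h j' x * ∏ j'' ∈ Finset.Ioo j' j, (1 - U j'' x))) ∧
    (∀ j ∈ Finset.Icc 1 N, ∀ x,
      |∑ j' ∈ Finset.Ico 1 j, h j' x * ∏ j'' ∈ Finset.Ioo j' j, (1 - U j'' x)| ≤ C) := by
  refine ⟨fun x => sum_sub_sum_mul_prod_Ioc_one_sub (h · x) (U · x) 1 N, fun j hj x => ?_⟩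
  have hsub : Ico 1 j ⊆ Icc 1 N := Ico_subset_Icc_self.trans (Icc_subset_Icc_right (mem_Icc.1 hj).2)
  exact abs_sum_mul_prod_Ioo_one_sub_le hC.le (fun k hk => hh k (hsub hk) x)
    (fun k hk => (hU k (hsub hk) x).2)
end

section
/- Let (ω_j)_{j∈ℤ} be nonnegative real numbers and c ∈ ℤ. Then for every N, Σ_{j ≤ N, j ≡ c (mod R)} 2^j ω_j · 𝟙[2^j ω_j > (1/2) Σ_{k < j, k ≡ c (mod R)} 2^k ω_k] ≤ 3 · sup_{j ≤ N} (2^j ω_j), where 𝟙[·] is the indicator of the stated condition. -/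
open scoped ENNReal

theorem ENNReal.tsum_le_add_tsum_lt {α : Type*} [LinearOrder α] (f : α → ℝ≥0∞) (P : α → Prop)
    (a : α) :
    ∑' j : {j // j ≤ a ∧ P j}, f j ≤ f a + ∑' j : {j // j < a ∧ P j}, f j := by
  have hsub : {j | j ≤ a ∧ P j} ⊆ {a} ∪ {j | j < a ∧ P j} := by
    rintro j ⟨hja, hPj⟩
    rcases hja.eq_or_lt with rfl | hlt
    · exact Or.inl rfl
    · exact Or.inr ⟨hlt, hPj⟩
  calc ∑' j : {j // j ≤ a ∧ P j}, f j ≤ ∑' j : ↑({a} ∪ {j | j < a ∧ P j}), f j :=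
        ENNReal.tsum_mono_subtype f hsub
    _ ≤ ∑' j : ({a} : Set α), f j + ∑' j : {j // j < a ∧ P j}, f j :=
        ENNReal.tsum_union_le f {a} {j | j < a ∧ P j}
    _ = _ := by rw [tsum_singleton]

theorem ENNReal.le_inv_mul_of_mul_lt {a b c : ℝ≥0∞} (ha : a ≠ ∞) (h : a * b < c) :
    b ≤ a⁻¹ * c := by
  rw [← ENNReal.div_eq_inv_mul,
    ENNReal.le_div_iff_mul_le (Or.inr (ne_bot_of_gt h)) (Or.inl ha), mul_comm]
  exact h.le

theorem ENNReal.tsum_indicator_dominant_le_mul_iSup (f : ℤ → ℝ≥0∞) (P : ℤ → Prop) {θ : ℝ≥0∞}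
    (hθ : θ ≠ ∞) (N : ℤ) :
    ∑' j : {j // j ≤ N ∧ P j},
      {j | θ * ∑' k : {k // k < j ∧ P k}, f k < f j}.indicator f j
    ≤ (1 + θ⁻¹) * ⨆ j : {j // j ≤ N}, f j := by
  set I := {j | θ * ∑' k : {k // k < j ∧ P k}, f k < f j}
  by_cases hI : ∃ j, j ≤ N ∧ P j ∧ j ∈ I
  swap
  · simp only [not_exists, not_and] at hI
    rw [ENNReal.tsum_eq_zero.mpr fun j : {j // j ≤ N ∧ P j} =>
      Set.indicator_of_notMem (hI j j.2.1 j.2.2) f]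
    exact zero_le
  -- the last dominant index carries the whole sum: all earlier ones are bounded by its prefix sum
  obtain ⟨j₀, ⟨hj₀N, -, hj₀I⟩, hmax⟩ :=
    Int.exists_greatest_of_bdd (P := fun j => j ≤ N ∧ P j ∧ j ∈ I) ⟨N, fun j hj => hj.1⟩ hI
  have hsub : {j | j ≤ N ∧ P j} ∩ I ⊆ {j | j ≤ j₀ ∧ P j} :=
    fun j ⟨⟨hjN, hPj⟩, hjI⟩ => ⟨hmax j ⟨hjN, hPj, hjI⟩, hPj⟩
  calc ∑' j : {j // j ≤ N ∧ P j}, I.indicator f j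
      ≤ ∑' j : {j // j ≤ j₀ ∧ P j}, f j := by
        refine (tsum_subtype {j | j ≤ N ∧ P j} (I.indicator f)).trans_le
          (.trans_eq (ENNReal.tsum_le_tsum fun j => ?_) (tsum_subtype {j | j ≤ j₀ ∧ P j} f).symm)
        rw [Set.indicator_indicator]
        exact Set.indicator_le_indicator_of_subset hsub (fun _ => zero_le) j
    _ ≤ f j₀ + ∑' k : {k // k < j₀ ∧ P k}, f k := ENNReal.tsum_le_add_tsum_lt f P j₀
    _ ≤ f j₀ + θ⁻¹ * f j₀ := by gcongr; exact ENNReal.le_inv_mul_of_mul_lt hθ hj₀I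
    _ = (1 + θ⁻¹) * f j₀ := by ring
    _ ≤ (1 + θ⁻¹) * ⨆ j : {j // j ≤ N}, f j := by
        gcongr; exact le_iSup (fun j : {j // j ≤ N} => f j) ⟨j₀, hj₀N⟩

theorem single_class_maximal_bound_general (R : ℕ) (c : ℤ)
    (ω : ℤ → ℝ) (N : ℤ) :
    ∑' j : {j : ℤ // j ≤ N ∧ j ≡ c [ZMOD (R : ℤ)]},
      Set.indicator
        {j : ℤ | ENNReal.ofReal ((1 : ℝ) / 2) *
            (∑' k : {k : ℤ // k < j ∧ k ≡ c [ZMOD (R : ℤ)]},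
              ENNReal.ofReal ((2 : ℝ) ^ (k : ℤ) * ω k))
          < ENNReal.ofReal ((2 : ℝ) ^ j * ω j)}
        (fun j => ENNReal.ofReal ((2 : ℝ) ^ j * ω j)) (j : ℤ)
    ≤ 3 * ⨆ j : {j : ℤ // j ≤ N}, ENNReal.ofReal ((2 : ℝ) ^ (j : ℤ) * ω j) := by
  have hhalf : ENNReal.ofReal ((1 : ℝ) / 2) = 2⁻¹ := by
    rw [one_div, ENNReal.ofReal_inv_of_pos two_pos, ENNReal.ofReal_ofNat]
  have hthree : (1 + (2 : ℝ≥0∞)⁻¹⁻¹) = 3 := by norm_num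
  simpa only [hhalf, hthree] using ENNReal.tsum_indicator_dominant_le_mul_iSup
    (fun j => ENNReal.ofReal ((2 : ℝ) ^ j * ω j)) (· ≡ c [ZMOD (R : ℤ)])
    (by simp : (2 : ℝ≥0∞)⁻¹ ≠ ∞) N

/-- For nonnegative `ω_j`, `c ∈ ℤ`, `R ≥ 1` and every `N`:
`Σ_{j ≤ N, j ≡ c (mod R)} 2^j ω_j · 𝟙[2^j ω_j > (1/2) Σ_{k < j, k ≡ c (mod R)} 2^k ω_k]
  ≤ 3 · sup_{j ≤ N} (2^j ω_j)`. -/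
theorem single_class_maximal_bound (R : ℕ) (hR : 1 ≤ R) (c : ℤ)
    (ω : ℤ → ℝ) (hω : ∀ j, 0 ≤ ω j) (N : ℤ) :
    ∑' j : {j : ℤ // j ≤ N ∧ j ≡ c [ZMOD (R : ℤ)]},
      Set.indicator
        {j : ℤ | ENNReal.ofReal ((1 : ℝ) / 2) *
            (∑' k : {k : ℤ // k < j ∧ k ≡ c [ZMOD (R : ℤ)]},
              ENNReal.ofReal ((2 : ℝ) ^ (k : ℤ) * ω k))
          < ENNReal.ofReal ((2 : ℝ) ^ j * ω j)}
        (fun j => ENNReal.ofReal ((2 : ℝ) ^ j * ω j)) (j : ℤ)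
    ≤ 3 * ⨆ j : {j : ℤ // j ≤ N}, ENNReal.ofReal ((2 : ℝ) ^ (j : ℤ) * ω j) :=
  single_class_maximal_bound_general R c ω N
end

section
/- Let (ω_j)_{j∈ℤ} be nonnegative reals, R ≥ 1 an integer. Then Σ_{j∈ℤ} 2^j ω_j · 𝟙[2^j ω_j > (1/2) Σ_{k < j, k ≡ j (mod R)} 2^k ω_k] ≤ 3R · sup_{j∈ℤ} (2^j ω_j), provided the supremum is finite. -/
open scoped ENNReal

/-! Within one residue class, if `m` is the largest dominant index among finitely many, every
other dominant index is an earlier member of the class of `m`, so together they weigh at most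
`2 f m`; hence the dominant indices of a class carry at most `3 sup f`. Summing over the `R`
classes gives `3 R sup f`. -/

variable {α ι : Type*} [LinearOrder α] (c : α → ι) (f : α → ℝ≥0∞)

def dominantInClass : Set α :=
  {j | 2⁻¹ * ∑' k : {k // k < j ∧ c k = c j}, f k < f j}

variable {c f}

theorem tsum_earlier_le_two_mul_of_mem_dominantInClass {j : α} (hj : j ∈ dominantInClass c f) :
    ∑' k : {k // k < j ∧ c k = c j}, f k ≤ 2 * f j :=
  (ENNReal.inv_mul_le_iff two_ne_zero ENNReal.ofNat_ne_top).1 hj.le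

variable (c f)

theorem tsum_indicator_fiber_dominantInClass_le (r : ι) :
    ∑' j, (c ⁻¹' {r} ∩ dominantInClass c f).indicator f j ≤ 3 * ⨆ j, f j := by
  classical
  rw [ENNReal.tsum_eq_iSup_sum]
  refine iSup_le fun F => ?_
  rw [Finset.sum_indicator_eq_sum_filter]
  set D := {i ∈ F | i ∈ c ⁻¹' {r} ∩ dominantInClass c f}
  rcases D.eq_empty_or_nonempty with hD | hD
  · simp [hD]
  set m := D.max' hD
  have hm : m ∈ c ⁻¹' {r} ∩ dominantInClass c f := (Finset.mem_filter.1 (D.max'_mem hD)).2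
  have hrest : ∑ i ∈ D.erase m, f i ≤ ∑' k : {k // k < m ∧ c k = c m}, f k := by
    calc ∑ i ∈ D.erase m, f i
        = ∑ i ∈ D.erase m, {k | k < m ∧ c k = c m}.indicator f i := by
          refine Finset.sum_congr rfl fun i hi => (Set.indicator_of_mem ?_ f).symm
          obtain ⟨him, hiD⟩ := Finset.mem_erase.1 hi
          have hi_class : c i = r := (Finset.mem_filter.1 hiD).2.1
          exact ⟨lt_of_le_of_ne (D.le_max' i hiD) him, hi_class.trans hm.1.symm⟩
      _ ≤ ∑' k, {k | k < m ∧ c k = c m}.indicator f k := ENNReal.sum_le_tsum _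
      _ = _ := (tsum_subtype _ f).symm
  calc ∑ i ∈ D, f i = f m + ∑ i ∈ D.erase m, f i := (Finset.add_sum_erase _ _ (D.max'_mem hD)).symm
    _ ≤ f m + 2 * f m := by grw [hrest, tsum_earlier_le_two_mul_of_mem_dominantInClass hm.2]
    _ = 3 * f m := by ring
    _ ≤ 3 * ⨆ j, f j := by gcongr; exact le_iSup f m

theorem tsum_indicator_dominantInClass_le (s : Finset ι) (hs : ∀ j, c j ∈ s) :
    ∑' j, (dominantInClass c f).indicator f j ≤ 3 * s.card * ⨆ j, f j := by
  classical
  have hsplit : ∀ j, (dominantInClass c f).indicator f j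
      = ∑ r ∈ s, (c ⁻¹' {r} ∩ dominantInClass c f).indicator f j := by
    intro j
    simp only [Set.indicator_apply, Set.mem_inter_iff, Set.mem_preimage, Set.mem_singleton_iff,
      ite_and, Finset.sum_ite_eq, if_pos (hs j)]
  calc ∑' j, (dominantInClass c f).indicator f j
      = ∑ r ∈ s, ∑' j, (c ⁻¹' {r} ∩ dominantInClass c f).indicator f j := by
        simp_rw [hsplit]
        exact Summable.tsum_finsetSum fun _ _ => ENNReal.summable
    _ ≤ ∑ _r ∈ s, 3 * ⨆ j, f j :=
        Finset.sum_le_sum fun r _ => tsum_indicator_fiber_dominantInClass_le c f r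
    _ = 3 * s.card * ⨆ j, f j := by rw [Finset.sum_const, nsmul_eq_mul]; ring

theorem all_classes_maximal_bound_general (R : ℕ) (hR : 1 ≤ R)
    (ω : ℤ → ℝ) :
    ∑' j : ℤ,
      Set.indicator
        {j : ℤ | ENNReal.ofReal ((1 : ℝ) / 2) *
            (∑' k : {k : ℤ // k < j ∧ k ≡ j [ZMOD (R : ℤ)]},
              ENNReal.ofReal ((2 : ℝ) ^ (k : ℤ) * ω k))
          < ENNReal.ofReal ((2 : ℝ) ^ j * ω j)}
        (fun j => ENNReal.ofReal ((2 : ℝ) ^ j * ω j)) j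
    ≤ 3 * (R : ℝ≥0∞) * ⨆ j : ℤ, ENNReal.ofReal ((2 : ℝ) ^ j * ω j) := by
  have hR' : (0 : ℤ) < R := by exact_mod_cast hR
  have h_half : ENNReal.ofReal ((1 : ℝ) / 2) = 2⁻¹ := by
    rw [one_div, ENNReal.ofReal_inv_of_pos two_pos, ENNReal.ofReal_ofNat]
  -- `k ≡ j [ZMOD R]` unfolds to `k % R = j % R`, and the residues `j % R` lie in `[0, R)`.
  have h := tsum_indicator_dominantInClass_le (fun j : ℤ => j % R)
    (fun j => ENNReal.ofReal ((2 : ℝ) ^ j * ω j)) (Finset.Ico 0 R)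
    fun j => Finset.mem_Ico.2 ⟨Int.emod_nonneg j hR'.ne', Int.emod_lt_of_pos j hR'⟩
  rw [Int.card_Ico, sub_zero, Int.toNat_natCast] at h
  rw [h_half]
  exact h

/-- For nonnegative `ω_j` and an integer `R ≥ 1`, provided `sup_j (2^j ω_j)` is finite:
`Σ_{j∈ℤ} 2^j ω_j · 𝟙[2^j ω_j > (1/2) Σ_{k < j, k ≡ j (mod R)} 2^k ω_k]
  ≤ 3R · sup_{j∈ℤ} (2^j ω_j)`. -/
theorem all_classes_maximal_bound (R : ℕ) (hR : 1 ≤ R)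
    (ω : ℤ → ℝ) (hω : ∀ j, 0 ≤ ω j)
    (hsup : (⨆ j : ℤ, ENNReal.ofReal ((2 : ℝ) ^ j * ω j)) ≠ ⊤) :
    ∑' j : ℤ,
      Set.indicator
        {j : ℤ | ENNReal.ofReal ((1 : ℝ) / 2) *
            (∑' k : {k : ℤ // k < j ∧ k ≡ j [ZMOD (R : ℤ)]},
              ENNReal.ofReal ((2 : ℝ) ^ (k : ℤ) * ω k))
          < ENNReal.ofReal ((2 : ℝ) ^ j * ω j)}
        (fun j => ENNReal.ofReal ((2 : ℝ) ^ j * ω j)) j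
    ≤ 3 * (R : ℝ≥0∞) * ⨆ j : ℤ, ENNReal.ofReal ((2 : ℝ) ^ j * ω j) :=
  all_classes_maximal_bound_general R hR ω
end
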